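/- Let G and H be Polish groups and let φ : G → H be a continuous surjective group homomorphism. If H can be partitioned into a Haar null set and a meagre set, then G can also be partitioned into a Haar null set and a meagre set. -/

import Mathlib

/-!
A continuous surjective homomorphism `φ : G → H` of Polish groups is open: for a closed identity
neighbourhood `V`, the set `φ '' V` is analytic, hence has the Baire property, and it is
non-meagre because countably many translates of it cover `H`; Pettis' theorem then makes
`φ '' V * (φ '' V)⁻¹ = φ '' (V * V⁻¹)` an identity neighbourhood. Openness gives that preimages
of meagre sets are meagre, and, by successive approximation along a dense sequence of `G`, a Borel
right inverse `s` of `φ`. Pushing the witness measure of a Haar null set `N` forward along `s`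
gives a measure whose push-forward along `φ` is the original one, so it witnesses that `φ ⁻¹' N`
is Haar null. Hence the preimages of the two pieces of `H` partition `G`.
-/

open MeasureTheory Set

/-- A subset of a group with a measurable structure is *Haar null* (Christensen) if it is
contained in a Borel (here: measurable) set `B` admitting a Borel probability measure `μ`
all of whose two-sided translates `g • B • h` are `μ`-null. -/
def IsHaarNull {G : Type*} [Group G] [MeasurableSpace G] (A : Set G) : Prop :=
  ∃ B : Set G, A ⊆ B ∧ MeasurableSet B ∧
    ∃ μ : Measure G, IsProbabilityMeasure μ ∧ ∀ g h : G, μ ((fun b => g * b * h) '' B) = 0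

open Filter Topology TopologicalSpace

section BaireHull

variable {X : Type*} [TopologicalSpace X]

def nonmeagreLocus (S : Set X) : Set X := {x | ∀ U ∈ 𝓝 x, ¬IsMeagre (S ∩ U)}

def baireHull (S : Set X) : Set X := S ∪ nonmeagreLocus S

theorem isClosed_nonmeagreLocus (S : Set X) : IsClosed (nonmeagreLocus S) := by
  refine isOpen_compl_iff.1 (isOpen_iff_mem_nhds.2 fun x hx => ?_)
  simp only [nonmeagreLocus, mem_compl_iff, mem_ofPred_eq, not_forall, not_not] at hx
  obtain ⟨U, hU, hSU⟩ := hx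
  filter_upwards [eventually_mem_nhds_iff.2 hU] with y hy hyS
  exact hyS U hy hSU

theorem nonmeagreLocus_subset_closure (S : Set X) : nonmeagreLocus S ⊆ closure S :=
  fun _ hx => mem_closure_iff_nhds.2 fun U hU =>
    inter_comm S U ▸ nonempty_of_not_isMeagre (hx U hU)

theorem isMeagre_diff_nonmeagreLocus [SecondCountableTopology X] (S : Set X) :
    IsMeagre (S \ nonmeagreLocus S) := by
  have hloc : ∀ x ∈ S \ nonmeagreLocus S, ∃ U ∈ 𝓝 x, IsMeagre (S ∩ U) := by
    simp [nonmeagreLocus]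
  choose! U hU hSU using hloc
  obtain ⟨t, ht, htc, hcover⟩ :=
    countable_cover_nhdsWithin fun x hx => mem_nhdsWithin_of_mem_nhds (hU x hx)
  refine (isMeagre_biUnion htc fun x hx => hSU x (ht hx)).mono fun y hy => ?_
  obtain ⟨x, hx, hyx⟩ := mem_iUnion₂.1 (hcover hy)
  exact mem_iUnion₂.2 ⟨x, hx, hy.1, hyx⟩

theorem subset_baireHull (S : Set X) : S ⊆ baireHull S := subset_union_left

theorem baireHull_subset_closure (S : Set X) : baireHull S ⊆ closure S :=
  union_subset subset_closure (nonmeagreLocus_subset_closure S)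

theorem baireMeasurableSet_baireHull [SecondCountableTopology X] (S : Set X) :
    BaireMeasurableSet (baireHull S) := by
  have : baireHull S = nonmeagreLocus S ∪ S \ nonmeagreLocus S := by
    rw [baireHull, union_comm, union_sdiff_self]
  rw [this]
  exact (isClosed_nonmeagreLocus S).isOpen_compl.baireMeasurableSet.of_compl.union
    (isMeagre_diff_nonmeagreLocus S).baireMeasurableSet

theorem isMeagre_baireHull_diff {S C : Set X} (hC : BaireMeasurableSet C) (hSC : S ⊆ C) :
    IsMeagre (baireHull S \ C) := by
  obtain ⟨U, hU, hCU⟩ := hC.residualEq_isOpen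
  have hCU' : IsMeagre (C \ U) := by
    filter_upwards [eventuallyEq_set.1 hCU] with x hx ⟨hxC, hxU⟩
    exact hxU (hx.1 hxC)
  have hlocus : nonmeagreLocus S ⊆ closure U := fun x hx =>
    mem_closure_iff_nhds.2 fun V hV => by
      by_contra hVU
      exact hx V hV (hCU'.mono fun y hy =>
        show y ∈ C \ U from ⟨hSC hy.1, fun hyU => hVU ⟨y, hy.2, hyU⟩⟩)
  filter_upwards [eventuallyEq_set.1 hCU,
    eventuallyEq_set.1 (closure_residualEq hU.isLocallyClosed)] with x hxC hxU
  rintro ⟨hxS | hxS, hxC'⟩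
  · exact hxC' (hSC hxS)
  · exact hxC' (hxC.2 (hxU.1 (hlocus hxS)))

end BaireHull

section AnalyticSet

open PiNat

variable {X : Type*} [TopologicalSpace X]

theorem eq_of_forall_mem_closure_image_cylinder [T3Space X] {f : (ℕ → ℕ) → X}
    {g : ℕ → ℕ} {x : X} (hf : ContinuousAt f g) (hx : ∀ n, x ∈ closure (f '' cylinder g n)) :
    x = f g := by
  by_contra hne
  obtain ⟨C, hC, hCcl, hCx⟩ :=
    exists_mem_nhds_isClosed_subset (isOpen_compl_singleton.mem_nhds (Ne.symm hne))
  obtain ⟨_, ⟨z, n, rfl⟩, hgz, hzC⟩ :=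
    (isTopologicalBasis_cylinders fun _ => ℕ).mem_nhds_iff.1 (hf.preimage_mem_nhds hC)
  rw [← mem_cylinder_iff_eq.1 hgz] at hzC
  exact hCx (closure_minimal (image_subset_iff.2 hzC) hCcl (hx n)) rfl

/-- A list `l` codes the cylinder of sequences whose first `l.length` terms are `l` read
backwards, the convention of `PiNat.res`; so `k :: l` extends the prefix by `k`. -/
theorem mem_range_of_forall_exists_cons [T3Space X] {f : (ℕ → ℕ) → X}
    (hf : Continuous f) {T : List ℕ → Set X}
    (hT : ∀ l, T l ⊆ closure (f '' {y | res y l.length = l}))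
    {x : X} (hx : x ∈ T []) (hstep : ∀ l, x ∈ T l → ∃ k, x ∈ T (k :: l)) : x ∈ range f := by
  choose! next hnext using hstep
  let u : ℕ → List ℕ := fun n => Nat.rec [] (fun _ l => next l :: l) n
  have hu : ∀ n, x ∈ T (u n) := fun n => by
    induction n with
    | zero => exact hx
    | succ n ih => exact hnext _ ih
  let g : ℕ → ℕ := fun n => next (u n)
  have hres : ∀ n, res g n = u n := fun n => by
    induction n with
    | zero => rfl
    | succ n ih => rw [res_succ, ih]
  refine ⟨g, (eq_of_forall_mem_closure_image_cylinder hf.continuousAt fun n => ?_).symm⟩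
  have := hT _ (hu n)
  rwa [← hres, res_length, ← cylinder_eq_res] at this

variable [SecondCountableTopology X] [T3Space X]

theorem Continuous.baireMeasurableSet_range {f : (ℕ → ℕ) → X} (hf : Continuous f) :
    BaireMeasurableSet (range f) := by
  set A : List ℕ → Set X := fun l => f '' {y | res y l.length = l}
  have hA : A [] = range f := by simp [A, res_zero]
  have hsplit : ∀ l, A l ⊆ ⋃ k, baireHull (A (k :: l)) := by
    rintro l _ ⟨y, hy, rfl⟩
    refine mem_iUnion.2 ⟨y l.length, subset_baireHull _ ⟨y, ?_, rfl⟩⟩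
    simp_all [res_succ]
  -- off the meagre set `Bad`, a point of `baireHull (A l)` lies in some `baireHull (A (k :: l))`
  set Bad := ⋃ l, baireHull (A l) \ ⋃ k, baireHull (A (k :: l))
  have hBad : IsMeagre Bad := isMeagre_iUnion fun l => isMeagre_baireHull_diff
    (.iUnion fun k => baireMeasurableSet_baireHull _) (hsplit l)
  refine (baireMeasurableSet_baireHull (range f)).congr (eventuallyEq_set.2 ?_)
  filter_upwards [hBad] with x hx
  refine ⟨fun hxA => ?_, fun hxf => subset_baireHull _ hxf⟩
  refine mem_range_of_forall_exists_cons hf (fun l => baireHull_subset_closure (A l))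
    (hA ▸ hxA) fun l hl => ?_
  by_contra! hk
  exact hx (mem_iUnion.2 ⟨l, hl, mem_iUnion.not.2 (not_exists.2 hk)⟩)

theorem MeasureTheory.AnalyticSet.baireMeasurableSet {A : Set X} (hA : AnalyticSet A) :
    BaireMeasurableSet A := by
  rw [AnalyticSet] at hA
  obtain rfl | ⟨f, hf, rfl⟩ := hA
  · exact IsMeagre.empty.baireMeasurableSet
  · exact hf.baireMeasurableSet_range

end AnalyticSet

section OpenMapping

open Pointwise

/-- Pettis' theorem. -/
theorem BaireMeasurableSet.mul_inv_mem_nhds_one {G : Type*} [Group G] [TopologicalSpace G]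
    [IsTopologicalGroup G] [BaireSpace G] {A : Set G} (hA : BaireMeasurableSet A)
    (hA' : ¬IsMeagre A) : A * A⁻¹ ∈ 𝓝 1 := by
  obtain ⟨U, hU, hAU⟩ := hA.residualEq_isOpen
  have hAU := eventuallyEq_set.1 hAU
  obtain ⟨a, haA, haU⟩ := (Frequently.and_eventually hA' hAU).exists
  have hUU : (1 : G) ∈ U * U⁻¹ := ⟨a, haU.1 haA, a⁻¹, by simpa using haU.1 haA, mul_inv_cancel a⟩
  refine mem_of_superset (hU.mul_right.mem_nhds hUU) ?_
  rintro _ ⟨p, hp, q, hq, rfl⟩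
  -- a generic point `b` of `U ∩ (p * q) • U` has `b` and `(p * q)⁻¹ * b` in `A`
  have hW : ¬IsMeagre (U ∩ ((p * q)⁻¹ * ·) ⁻¹' U) :=
    not_isMeagre_of_isOpen (hU.inter (hU.preimage (continuous_const_mul _)))
      ⟨p, hp, by simpa [mul_assoc] using hq⟩
  have hAU' : ∀ᵇ b : G, (p * q)⁻¹ * b ∈ A ↔ (p * q)⁻¹ * b ∈ U :=
    (tendsto_residual_of_isOpenMap (continuous_const_mul _) (isOpenMap_mul_left _)).eventually hAU
  obtain ⟨b, ⟨hbU, hbU'⟩, hbA, hbA'⟩ := (Frequently.and_eventually hW (hAU.and hAU')).exists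
  exact ⟨b, hbA.2 hbU, ((p * q)⁻¹ * b)⁻¹, by simpa using hbA'.2 hbU', by group⟩

variable {G H : Type*} [Group G] [TopologicalSpace G] [IsTopologicalGroup G]
  [Group H] [TopologicalSpace H] [IsTopologicalGroup H]

theorem MonoidHom.not_isMeagre_image_of_mem_nhds_one [SecondCountableTopology G]
    [BaireSpace H] (φ : G →* H) (hφ : Function.Surjective φ) {V : Set G} (hV : V ∈ 𝓝 1) :
    ¬IsMeagre (φ '' V) := by
  obtain ⟨s, hs, hcover⟩ :=
    TopologicalSpace.countable_cover_nhds fun g : G => smul_mem_nhds_self.2 hV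
  intro hmeagre
  refine not_isMeagre_of_isOpen (isOpen_univ (X := H)) univ_nonempty ?_
  rw [← hφ.range_eq, ← image_univ, ← hcover, image_iUnion₂]
  refine isMeagre_biUnion hs fun g _ => ?_
  rw [image_smul_distrib, ← image_smul]
  exact (Homeomorph.mulLeft (φ g)).isInducing.isMeagre_image hmeagre

theorem MonoidHom.isOpenMap_of_polishSpace [PolishSpace G] [SecondCountableTopology H]
    [T2Space H] [BaireSpace H] (φ : G →* H) (hc : Continuous φ) (hs : Function.Surjective φ) :
    IsOpenMap φ := by
  rw [IsTopologicalGroup.isOpenMap_iff_nhds_one, le_map_iff]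
  intro U hU
  obtain ⟨V, hV, hVcl, hVinv, hVU⟩ := exists_closed_nhds_one_inv_eq_mul_subset hU
  have hA := (hVcl.analyticSet.image_of_continuous hc).baireMeasurableSet
  refine mem_of_superset
    (hA.mul_inv_mem_nhds_one (φ.not_isMeagre_image_of_mem_nhds_one hs hV)) ?_
  rw [← image_inv, ← image_mul, hVinv]
  exact image_mono hVU

end OpenMapping

section MeasurableSection

open Metric

variable {X Y : Type*} [MetricSpace X] [SeparableSpace X] [Nonempty X] [MeasurableSpace X]
  [TopologicalSpace Y] [MeasurableSpace Y] [OpensMeasurableSpace Y]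
  {f : X → Y}

theorem IsOpenMap.exists_measurable_near_fiber (hf : IsOpenMap f) {W : Y → Set X}
    (hWo : ∀ y, IsOpen (W y)) (hWm : ∀ x, MeasurableSet {y | x ∈ W y})
    (hW : ∀ y, ∃ x ∈ W y, f x = y) {δ : ℝ} (hδ : 0 < δ) :
    ∃ s : Y → X, Measurable s ∧ ∀ y, s y ∈ W y ∧ ∃ x, f x = y ∧ dist x (s y) < δ := by
  classical
  have hd : ∀ y, ∃ j, denseSeq X j ∈ W y ∧ y ∈ f '' ball (denseSeq X j) δ := by
    intro y
    obtain ⟨x, hxW, rfl⟩ := hW y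
    obtain ⟨j, hjW, hjx⟩ := (denseRange_denseSeq X).exists_mem_open
      ((hWo _).inter isOpen_ball) ⟨x, hxW, mem_ball_self hδ⟩
    exact ⟨j, hjW, x, mem_ball_comm.1 hjx, rfl⟩
  have hmeas :
      ∀ j, MeasurableSet {y | denseSeq X j ∈ W y ∧ y ∈ f '' ball (denseSeq X j) δ} :=
    fun j => (hWm _).inter (hf _ isOpen_ball).measurableSet
  refine ⟨fun y => denseSeq X (Nat.find (hd y)),
    Measurable.find (fun _ => measurable_const) hmeas hd, fun y => ?_⟩
  obtain ⟨hW, x, hx, hxy⟩ := Nat.find_spec (hd y)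
  exact ⟨hW, x, hxy, hx⟩

theorem IsOpenMap.exists_measurable_rightInverse [CompleteSpace X] [BorelSpace X] [T1Space Y]
    (hf : IsOpenMap f) (hc : Continuous f) (hsurj : Function.Surjective f) :
    ∃ s : Y → X, Measurable s ∧ ∀ y, f (s y) = y := by
  have hr : ∀ n : ℕ, (0 : ℝ) < (1 / 2) ^ n := fun n => by positivity
  obtain ⟨s₀, hs₀, hs₀f⟩ := hf.exists_measurable_near_fiber (fun _ => isOpen_univ)
    (fun _ => MeasurableSet.univ) (fun y => (hsurj y).imp fun x hx => ⟨trivial, hx⟩) (hr 0)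
  have hstep : ∀ (n : ℕ) (s : Y → X), Measurable s →
      (∀ y, ∃ x, f x = y ∧ dist x (s y) < (1 / 2) ^ n) →
      ∃ s' : Y → X, Measurable s' ∧ ∀ y, s' y ∈ ball (s y) ((1 / 2) ^ n) ∧
        ∃ x, f x = y ∧ dist x (s' y) < (1 / 2) ^ (n + 1) := fun n s hs hsf =>
    hf.exists_measurable_near_fiber (fun _ => isOpen_ball)
      (fun x => measurableSet_lt (measurable_const.dist hs) measurable_const)
      (fun y => (hsf y).imp fun x hx => ⟨hx.2, hx.1⟩) (hr (n + 1))
  choose! next hnext_meas hnext using hstep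
  let u : ℕ → Y → X := fun n => Nat.rec s₀ (fun n s => next n s) n
  have hu : ∀ n, Measurable (u n) ∧ ∀ y, ∃ x, f x = y ∧ dist x (u n y) < (1 / 2) ^ n := by
    intro n
    induction n with
    | zero => exact ⟨hs₀, fun y => (hs₀f y).2⟩
    | succ n ih => exact ⟨hnext_meas n _ ih.1 ih.2, fun y => (hnext n _ ih.1 ih.2 y).2⟩
  have hdist : ∀ n y, dist (u n y) (u (n + 1) y) ≤ 1 * (1 / 2) ^ n := fun n y => by
    rw [dist_comm, one_mul]
    exact (hnext n _ (hu n).1 (hu n).2 y).1.le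
  choose s hs using fun y => cauchySeq_tendsto_of_complete
    (cauchySeq_of_le_geometric _ _ (by norm_num) (hdist · y))
  refine ⟨s, measurable_of_tendsto_metrizable (fun n => (hu n).1) (tendsto_pi_nhds.2 hs),
    fun y => ?_⟩
  choose x hxf hx using fun n => (hu n).2 y
  have hxs : Tendsto x atTop (𝓝 (s y)) := (hs y).congr_dist <|
    squeeze_zero (fun _ => dist_nonneg) (fun n => by rw [dist_comm]; exact (hx n).le)
      (tendsto_pow_atTop_nhds_zero_of_lt_one (by norm_num) (by norm_num))
  exact ((isClosed_singleton.preimage hc).mem_of_tendsto hxs (.of_forall hxf) : s y ∈ f ⁻¹' {y})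

end MeasurableSection

theorem MonoidHom.image_mul_mul_preimage {G H : Type*} [Group G] [Group H] (φ : G →* H) (B : Set H)
    (g h : G) :
    (fun b => g * b * h) '' (φ ⁻¹' B) = φ ⁻¹' ((fun b => φ g * b * φ h) '' B) := by
  ext x
  constructor
  · rintro ⟨b, hb, rfl⟩
    exact ⟨φ b, hb, by simp⟩
  · rintro ⟨c, hc, hcx⟩
    refine ⟨g⁻¹ * x * h⁻¹, ?_, by group⟩
    simpa [← hcx, mul_assoc] using hc

theorem IsHaarNull.preimage {G H : Type*} [Group G] [MeasurableSpace G] [Group H]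
    [MeasurableSpace H] (φ : G →* H) (hφ : Measurable φ) {s : H → G} (hs : Measurable s)
    (hφs : ∀ y, φ (s y) = y) {N : Set H} (hN : IsHaarNull N) : IsHaarNull (φ ⁻¹' N) := by
  obtain ⟨B, hNB, hB, μ, hμ, hμB⟩ := hN
  have hmap : (μ.map s).map φ = μ := by
    rw [Measure.map_map hφ hs, show φ ∘ s = id from funext hφs, Measure.map_id]
  refine ⟨φ ⁻¹' B, preimage_mono hNB, hφ hB, μ.map s,
    Measure.isProbabilityMeasure_map hs.aemeasurable, fun g h => nonpos_iff_eq_zero.1 ?_⟩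
  calc μ.map s ((fun b => g * b * h) '' (φ ⁻¹' B))
      = μ.map s (φ ⁻¹' ((fun b => φ g * b * φ h) '' B)) := by rw [φ.image_mul_mul_preimage]
    _ ≤ (μ.map s).map φ ((fun b => φ g * b * φ h) '' B) := Measure.le_map_apply hφ.aemeasurable _
    _ = 0 := by rw [hmap, hμB]

/-- If `φ : G → H` is a continuous surjective homomorphism of Polish groups and `H` can be
partitioned into a Haar null set and a meagre set, then so can `G`. -/
theorem stmt_19 {G H : Type*}
    [Group G] [TopologicalSpace G] [IsTopologicalGroup G] [PolishSpace G]
    [MeasurableSpace G] [BorelSpace G]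
    [Group H] [TopologicalSpace H] [IsTopologicalGroup H] [PolishSpace H]
    [MeasurableSpace H] [BorelSpace H]
    (φ : G →* H) (hφcont : Continuous φ) (hφsurj : Function.Surjective φ)
    (hH : ∃ N M : Set H, IsHaarNull N ∧ IsMeagre M ∧ N ∪ M = Set.univ ∧ Disjoint N M) :
    ∃ N M : Set G, IsHaarNull N ∧ IsMeagre M ∧ N ∪ M = Set.univ ∧ Disjoint N M := by
  obtain ⟨N, M, hN, hM, hNM, hdisj⟩ := hH
  let := upgradeIsCompletelyMetrizable G
  have hopen : IsOpenMap φ := φ.isOpenMap_of_polishSpace hφcont hφsurj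
  obtain ⟨s, hs, hφs⟩ := hopen.exists_measurable_rightInverse hφcont hφsurj
  refine ⟨φ ⁻¹' N, φ ⁻¹' M, hN.preimage φ hφcont.measurable hs hφs,
    hM.preimage_of_isOpenMap hφcont hopen, ?_, hdisj.preimage φ⟩
  rw [← preimage_union, hNM, preimage_univ]
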